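/- arXiv:0704.3248 — 3 statements merged into one kernel-verified Lean document; each statement's English description precedes it below -/
import Mathlib

section
/- Let r : ℂ → ℝ be a C² function of constant width w, and assume that the functions (r+ψ)² − |σ|² and |σ|² − (r − w/2 + ψ)² are μ-integrable. Then ∫ℂ ((r+ψ)² − |σ|²) dμ = π·w² − ∫ℂ (|σ|² − (r − w/2 + ψ)²) dμ. -/
open Complex MeasureTheory ComplexConjugate

noncomputable section

/-- Wirtinger derivative ∂/∂ξ of a complex-valued function. -/
def wd (f : ℂ → ℂ) (ξ : ℂ) : ℂ :=
  (1 / 2) * (fderiv ℝ f ξ 1 - Complex.I * fderiv ℝ f ξ Complex.I)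

/-- Wirtinger derivative ∂/∂ξ̄ of a real-valued function, as a complex number. -/
def wdbarR (r : ℂ → ℝ) (ξ : ℂ) : ℂ :=
  (1 / 2) * ((fderiv ℝ r ξ 1 : ℝ) + Complex.I * (fderiv ℝ r ξ Complex.I : ℝ))

/-- F = (1/2)(1+|ξ|²)² ∂r/∂ξ̄. -/
def Fcong (r : ℂ → ℝ) (ξ : ℂ) : ℂ :=
  (1 / 2) * ((1 + Complex.normSq ξ) ^ 2 : ℝ) * wdbarR r ξ

/-- ψ = (1+|ξ|²)² ∂/∂ξ [F/(1+|ξ|²)²] (real-valued). -/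
def psiSlope (r : ℂ → ℝ) (ξ : ℂ) : ℝ :=
  (((1 + Complex.normSq ξ) ^ 2 : ℝ) *
    wd (fun z => Fcong r z / (((1 + Complex.normSq z) ^ 2 : ℝ) : ℂ)) ξ).re

/-- σ = −∂(conj F)/∂ξ. -/
def sigmaSlope (r : ℂ → ℝ) (ξ : ℂ) : ℂ :=
  - wd (fun z => conj (Fcong r z)) ξ

/-- The round sphere area measure in the stereographic coordinate. -/
def muSphere : Measure ℂ :=
  volume.withDensity fun ξ => ENNReal.ofReal (4 / (1 + Complex.normSq ξ) ^ 2)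

/-- Constant width w: r(ξ) + r(−1/conj ξ) = w for all ξ ≠ 0. -/
def ConstWidth (r : ℂ → ℝ) (w : ℝ) : Prop :=
  ∀ ξ : ℂ, ξ ≠ 0 → r ξ + r (-1 / conj ξ) = w

/-! The antipodal map `A ξ = -1 / conj ξ` is an isometry of the round sphere: it preserves `μ`,
and it transforms the Laplacian by the conformal factor, `Δ (f ∘ A) = |A'|² (Δ f ∘ A)` with
`|A'|² = |ξ|⁻⁴`. Since `ψ = (1 + |ξ|²)² Δr / 8`, constant width `r + r ∘ A = w` gives
`ψ ∘ A = -ψ`, so `h = r + ψ` satisfies `h ∘ A = w - h`. The sum of the two integrands is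
`w h - w² / 4`, which `A` sends to `w² / 2` minus itself; its integral is therefore half of
`(w² / 2) μ(ℂ) = 2π w²`. -/

open Set Filter Topology Laplacian InnerProductSpace
open scoped Real

def antipode (ξ : ℂ) : ℂ := -1 / conj ξ

lemma antipode_ne_zero {ξ : ℂ} (hξ : ξ ≠ 0) : antipode ξ ≠ 0 := by
  simp [antipode, hξ]

lemma antipode_antipode {ξ : ℂ} (hξ : ξ ≠ 0) : antipode (antipode ξ) = ξ := by
  have : conj ξ ≠ 0 := by simpa using hξ
  simp only [antipode, map_neg, map_div₀, map_one, conj_conj]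
  field_simp

lemma normSq_antipode (ξ : ℂ) : normSq (antipode ξ) = (normSq ξ)⁻¹ := by
  simp [antipode]

lemma image_antipode_compl_zero : antipode '' {0}ᶜ = {0}ᶜ := by
  ext z
  refine ⟨?_, fun hz => ⟨antipode z, antipode_ne_zero hz, antipode_antipode hz⟩⟩
  rintro ⟨y, hy, rfl⟩
  exact antipode_ne_zero hy

lemma injOn_antipode : InjOn antipode {0}ᶜ := by
  intro a ha b hb hab
  rw [← antipode_antipode ha, hab, antipode_antipode hb]

def mulConj (a : ℂ) : ℂ →L[ℝ] ℂ := a • conjCLE.toContinuousLinearMap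

@[simp] lemma mulConj_apply (a v : ℂ) : mulConj a v = a * conj v := rfl

lemma det_mulConj (a : ℂ) : (mulConj a).det = -normSq a := by
  rw [ContinuousLinearMap.det, ← LinearMap.det_toMatrix basisOneI, Matrix.det_fin_two]
  simp [LinearMap.toMatrix_apply, normSq_apply]
  ring

lemma hasFDerivAt_antipode {ξ : ℂ} (hξ : ξ ≠ 0) :
    HasFDerivAt antipode (mulConj (antipode ξ ^ 2)) ξ := by
  have hc : conj ξ ≠ 0 := by simpa using hξ
  have hinv : HasDerivAt (fun u : ℂ => -u⁻¹) ((conj ξ ^ 2)⁻¹) (conj ξ) := by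
    simpa using (hasDerivAt_inv hc).fun_neg
  have hA : antipode = (fun u : ℂ => -u⁻¹) ∘ conj := by
    funext z; simp [antipode, neg_div]
  have h := (hinv.hasFDerivAt.restrictScalars ℝ).comp ξ conjCLE.hasFDerivAt
  rw [← hA] at h
  refine h.congr_fderiv ?_
  ext v; simp [antipode, div_pow, mul_comm]

lemma laplacian_eq_fderiv_fderiv {F : Type*} [NormedAddCommGroup F] [NormedSpace ℝ F]
    (f : ℂ → F) (z : ℂ) :
    Δ f z = fderiv ℝ (fderiv ℝ f) z 1 1 + fderiv ℝ (fderiv ℝ f) z I I := by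
  simp [laplacian_eq_iteratedFDeriv_complexPlane, iteratedFDeriv_two_apply]

lemma fderiv_fderiv_comp_antipode_apply {f : ℂ → ℝ} (hf : ContDiff ℝ 2 f) {ξ : ℂ} (hξ : ξ ≠ 0)
    (v u : ℂ) :
    fderiv ℝ (fderiv ℝ (f ∘ antipode)) ξ v u =
      fderiv ℝ (fderiv ℝ f) (antipode ξ) (mulConj (antipode ξ ^ 2) v)
          (mulConj (antipode ξ ^ 2) u)
        + fderiv ℝ f (antipode ξ) (2 * antipode ξ ^ 3 * conj v * conj u) := by
  have hf1 : Differentiable ℝ f := hf.differentiable (by norm_num)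
  have hf2 : Differentiable ℝ (fderiv ℝ f) :=
    (hf.fderiv_right (le_refl _)).differentiable one_ne_zero
  have hD : fderiv ℝ (f ∘ antipode) =ᶠ[𝓝 ξ]
      fun z => (fderiv ℝ f (antipode z)).comp (mulConj (antipode z ^ 2)) := by
    filter_upwards [eventually_ne_nhds hξ] with z hz
    exact ((hf1 _).hasFDerivAt.comp z (hasFDerivAt_antipode hz)).fderiv
  have hDf : HasFDerivAt (fun z => fderiv ℝ f (antipode z))
      ((fderiv ℝ (fderiv ℝ f) (antipode ξ)).comp (mulConj (antipode ξ ^ 2))) ξ :=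
    (hf2 _).hasFDerivAt.comp ξ (hasFDerivAt_antipode hξ)
  have hL := ((hasFDerivAt_antipode hξ).pow 2).smul_const conjCLE.toContinuousLinearMap
  rw [((hDf.clm_comp hL).congr_of_eventuallyEq hD).fderiv, add_comm]
  simp
  congr 2
  ring

lemma apply_self_add_apply_mul_I_self (S : ℂ →L[ℝ] ℂ →L[ℝ] ℝ) (a : ℂ) :
    S a a + S (a * I) (a * I) = normSq a * (S 1 1 + S I I) := by
  have ha : a = a.re • (1 : ℂ) + a.im • I := by simp
  have haI : a * I = (-a.im) • (1 : ℂ) + a.re • I := by simp [Complex.ext_iff]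
  rw [haI, ha]
  simp only [map_add, map_smul, add_apply, smul_apply, smul_eq_mul, normSq_apply]
  simp
  ring

lemma laplacian_comp_antipode {f : ℂ → ℝ} (hf : ContDiff ℝ 2 f) {ξ : ℂ} (hξ : ξ ≠ 0) :
    Δ (f ∘ antipode) ξ = normSq (antipode ξ) ^ 2 * Δ f (antipode ξ) := by
  have hfirst : fderiv ℝ f (antipode ξ) (2 * antipode ξ ^ 3 * conj 1 * conj 1)
      + fderiv ℝ f (antipode ξ) (2 * antipode ξ ^ 3 * conj I * conj I) = 0 := by
    rw [← map_add]
    simp [conj_I, mul_assoc]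
  rw [laplacian_eq_fderiv_fderiv, laplacian_eq_fderiv_fderiv,
    fderiv_fderiv_comp_antipode_apply hf hξ, fderiv_fderiv_comp_antipode_apply hf hξ,
    add_add_add_comm, hfirst, add_zero, ← map_pow, ← apply_self_add_apply_mul_I_self]
  simp only [mulConj_apply, map_one, mul_one, conj_I, mul_neg, map_neg, neg_apply, neg_neg]

lemma hasFDerivAt_wdbarR {r : ℂ → ℝ} (hr : ContDiff ℝ 2 r) (ξ : ℂ) :
    HasFDerivAt (wdbarR r)
      ((1 / 2 : ℂ) • (ofRealCLM.comp ((fderiv ℝ (fderiv ℝ r) ξ).flip 1)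
        + I • ofRealCLM.comp ((fderiv ℝ (fderiv ℝ r) ξ).flip I))) ξ := by
  have hD : HasFDerivAt (fderiv ℝ r) (fderiv ℝ (fderiv ℝ r) ξ) ξ :=
    ((hr.fderiv_right (le_refl _)).differentiable one_ne_zero ξ).hasFDerivAt
  have hpartial (u : ℂ) : HasFDerivAt (fun z => ((fderiv ℝ r z u : ℝ) : ℂ))
      (ofRealCLM.comp ((fderiv ℝ (fderiv ℝ r) ξ).flip u)) ξ :=
    (ofRealCLM.hasFDerivAt.comp ξ (hD.clm_apply (hasFDerivAt_const u ξ))).congr_fderiv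
      (by simp)
  exact ((hpartial 1).add ((hpartial I).const_mul I)).const_mul (1 / 2 : ℂ)

lemma psiSlope_eq {r : ℂ → ℝ} (hr : ContDiff ℝ 2 r) (ξ : ℂ) :
    psiSlope r ξ = (1 + normSq ξ) ^ 2 / 8 * Δ r ξ := by
  have hweight (z : ℂ) : (((1 + normSq z) ^ 2 : ℝ) : ℂ) ≠ 0 := by
    have := normSq_nonneg z
    exact_mod_cast (by positivity : (1 + normSq z) ^ 2 ≠ 0)
  have hF : (fun z => Fcong r z / (((1 + normSq z) ^ 2 : ℝ) : ℂ))
      = fun z => (1 / 2 : ℂ) * wdbarR r z := by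
    funext z
    rw [Fcong, div_eq_iff (hweight z)]
    ring
  have hW := hasFDerivAt_wdbarR hr ξ
  rw [psiSlope, hF, wd, fderiv_const_mul hW.differentiableAt, hW.fderiv, re_ofReal_mul,
    laplacian_eq_fderiv_fderiv]
  simp
  ring

lemma laplacian_antipode_of_constWidth {r : ℂ → ℝ} {w : ℝ} (hr : ContDiff ℝ 2 r)
    (hcw : ConstWidth r w) {ξ : ℂ} (hξ : ξ ≠ 0) :
    Δ r (antipode ξ) = -(normSq ξ ^ 2 * Δ r ξ) := by
  have hloc : r ∘ antipode =ᶠ[𝓝 ξ] (fun _ => w) - r := by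
    filter_upwards [eventually_ne_nhds hξ] with z hz
    simp only [Function.comp_apply, Pi.sub_apply, antipode, ← hcw z hz]
    ring
  have h := laplacian_comp_antipode hr hξ
  rw [(laplacian_congr_nhds hloc).eq_of_nhds, contDiffAt_const.laplacian_sub hr.contDiffAt,
    laplacian_const, Pi.zero_apply, zero_sub, normSq_antipode] at h
  have hpos : 0 < normSq ξ := normSq_pos.2 hξ
  field_simp at h
  rw [← h]
  ring

lemma psiSlope_antipode_of_constWidth {r : ℂ → ℝ} {w : ℝ} (hr : ContDiff ℝ 2 r)
    (hcw : ConstWidth r w) {ξ : ℂ} (hξ : ξ ≠ 0) :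
    psiSlope r (antipode ξ) = -psiSlope r ξ := by
  have hpos : 0 < normSq ξ := normSq_pos.2 hξ
  rw [psiSlope_eq hr, psiSlope_eq hr, normSq_antipode, laplacian_antipode_of_constWidth hr hcw hξ]
  field_simp
  ring

def sphereDensity (ξ : ℂ) : ℝ := 4 / (1 + normSq ξ) ^ 2

lemma sphereDensity_pos (ξ : ℂ) : 0 < sphereDensity ξ := by
  have := normSq_nonneg ξ
  unfold sphereDensity
  positivity

lemma continuous_sphereDensity : Continuous sphereDensity :=
  continuous_const.div ((continuous_const.add continuous_normSq).pow 2)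
    fun ξ => (by have := normSq_nonneg ξ; positivity)

lemma integrable_sphereDensity : Integrable sphereDensity := by
  have h := (integrable_rpow_neg_one_add_norm_sq (μ := (volume : Measure ℂ)) (r := 4)
    (by norm_num [finrank_real_complex])).const_mul 4
  refine h.congr (Eventually.of_forall fun ξ => ?_)
  have : (0 : ℝ) < 1 + ‖ξ‖ ^ 2 := by positivity
  rw [show (-4 / 2 : ℝ) = -(2 : ℕ) by norm_num]
  simp only [Real.rpow_neg this.le, Real.rpow_natCast]
  simp [sphereDensity, normSq_eq_norm_sq, div_eq_mul_inv]

lemma integral_Ioi_mul_four_div_one_add_sq_sq :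
    ∫ t in Ioi (0 : ℝ), t * (4 / (1 + t ^ 2) ^ 2) = 2 := by
  have hderiv (t : ℝ) (_ : t ∈ Ioi 0) :
      HasDerivAt (fun s : ℝ => -2 / (1 + s ^ 2)) (t * (4 / (1 + t ^ 2) ^ 2)) t := by
    have hne : 1 + t ^ 2 ≠ 0 := by positivity
    refine ((hasDerivAt_const t (-2 : ℝ)).fun_div ((hasDerivAt_pow 2 t).const_add 1)
      hne).congr_deriv ?_
    field_simp
    ring
  have hnonneg (t : ℝ) (ht : t ∈ Ioi 0) : 0 ≤ t * (4 / (1 + t ^ 2) ^ 2) := by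
    have : (0 : ℝ) < t := ht
    positivity
  have hcont : ContinuousWithinAt (fun s : ℝ => -2 / (1 + s ^ 2)) (Ici 0) 0 :=
    (continuousAt_const.div (by fun_prop) (by norm_num)).continuousWithinAt
  have hlim : Tendsto (fun s : ℝ => -2 / (1 + s ^ 2)) atTop (𝓝 0) :=
    (tendsto_atTop_add_const_left _ 1 (tendsto_pow_atTop two_ne_zero)).const_div_atTop (-2)
  rw [integral_Ioi_of_hasDerivAt_of_nonneg hcont hderiv hnonneg hlim]
  norm_num

lemma integral_sphereDensity : ∫ ξ, sphereDensity ξ = 4 * π := by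
  have hball : volume.real (Metric.ball (0 : ℂ) 1) = π := by
    simp [Measure.real, Complex.volume_ball]
  have h := integral_fun_norm_addHaar (volume : Measure ℂ) fun t : ℝ => 4 / (1 + t ^ 2) ^ 2
  simp only [finrank_real_complex, hball, Nat.add_one_sub_one, pow_one, smul_eq_mul,
    integral_Ioi_mul_four_div_one_add_sq_sq] at h
  simp only [sphereDensity, normSq_eq_norm_sq, h]
  norm_num
  ring

lemma muSphere_eq_withDensity :
    muSphere = volume.withDensity fun ξ => ENNReal.ofReal (sphereDensity ξ) := rfl

lemma integral_muSphere (g : ℂ → ℝ) : ∫ ξ, g ξ ∂muSphere = ∫ ξ, sphereDensity ξ * g ξ := by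
  rw [muSphere_eq_withDensity, integral_withDensity_eq_integral_toReal_smul
    continuous_sphereDensity.measurable.ennreal_ofReal (Eventually.of_forall fun _ => by simp)]
  simp_rw [ENNReal.toReal_ofReal (sphereDensity_pos _).le, smul_eq_mul]

lemma muSphere_univ : muSphere univ = ENNReal.ofReal (4 * π) := by
  rw [muSphere_eq_withDensity, withDensity_apply _ MeasurableSet.univ, Measure.restrict_univ,
    ← integral_sphereDensity, ofReal_integral_eq_lintegral_ofReal integrable_sphereDensity
      (Eventually.of_forall fun ξ => (sphereDensity_pos ξ).le)]

instance : IsFiniteMeasure muSphere := ⟨muSphere_univ ▸ ENNReal.ofReal_lt_top⟩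

lemma abs_det_fderiv_antipode_mul_sphereDensity {ξ : ℂ} (hξ : ξ ≠ 0) :
    |(mulConj (antipode ξ ^ 2)).det| * sphereDensity (antipode ξ) = sphereDensity ξ := by
  have hpos : 0 < normSq ξ := normSq_pos.2 hξ
  rw [det_mulConj, abs_neg, abs_of_nonneg (normSq_nonneg _), map_pow, normSq_antipode,
    sphereDensity, sphereDensity, normSq_antipode]
  field_simp
  ring

lemma integral_comp_antipode_muSphere (g : ℂ → ℝ) :
    ∫ ξ, g (antipode ξ) ∂muSphere = ∫ ξ, g ξ ∂muSphere := by
  have hs : MeasurableSet ({0}ᶜ : Set ℂ) := (measurableSet_singleton 0).compl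
  have hcov := integral_image_eq_integral_abs_det_fderiv_smul volume hs
    (fun ξ hξ => (hasFDerivAt_antipode hξ).hasFDerivWithinAt) injOn_antipode
    fun ξ => sphereDensity ξ * g ξ
  rw [image_antipode_compl_zero] at hcov
  calc ∫ ξ, g (antipode ξ) ∂muSphere
      = ∫ ξ in {0}ᶜ, sphereDensity ξ * g (antipode ξ) := by
        rw [integral_muSphere, restrict_compl_singleton]
    _ = ∫ ξ in {0}ᶜ,
          |(mulConj (antipode ξ ^ 2)).det| • (sphereDensity (antipode ξ) * g (antipode ξ)) :=
        setIntegral_congr_fun hs fun ξ hξ => by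
          rw [smul_eq_mul, ← mul_assoc, abs_det_fderiv_antipode_mul_sphereDensity hξ]
    _ = ∫ ξ, g ξ ∂muSphere := by rw [← hcov, restrict_compl_singleton, integral_muSphere]

lemma integral_muSphere_of_antipode_eq_sub {h : ℂ → ℝ} {c : ℝ} (hh : Integrable h muSphere)
    (hsymm : ∀ ξ ≠ 0, h (antipode ξ) = c - h ξ) : ∫ ξ, h ξ ∂muSphere = 2 * π * c := by
  have h0 : muSphere {0} = 0 := withDensity_absolutelyContinuous _ _ (measure_singleton 0)
  have hae : ∀ᵐ ξ ∂muSphere, h (antipode ξ) = c - h ξ :=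
    mem_of_superset (compl_mem_ae_iff.2 h0) hsymm
  have h2 := integral_comp_antipode_muSphere h
  rw [integral_congr_ae hae, integral_sub (integrable_const c) hh, integral_const,
    smul_eq_mul, measureReal_def, muSphere_univ, ENNReal.toReal_ofReal (by positivity)] at h2
  linarith

/-- the averaged-area identity: for a constant width surface the area
integral equals `π w²` minus the deficit integral. -/
theorem constant_width_area_identity
    (r : ℂ → ℝ) (w : ℝ) (hr : ContDiff ℝ 2 r) (hcw : ConstWidth r w)
    (hint₁ : Integrable
      (fun ξ => (r ξ + psiSlope r ξ) ^ 2 - Complex.normSq (sigmaSlope r ξ)) muSphere)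
    (hint₂ : Integrable
      (fun ξ => Complex.normSq (sigmaSlope r ξ) - (r ξ - w / 2 + psiSlope r ξ) ^ 2) muSphere) :
    ∫ ξ, ((r ξ + psiSlope r ξ) ^ 2 - Complex.normSq (sigmaSlope r ξ)) ∂muSphere
      = Real.pi * w ^ 2
        - ∫ ξ, (Complex.normSq (sigmaSlope r ξ) - (r ξ - w / 2 + psiSlope r ξ) ^ 2) ∂muSphere := by
  have hsymm (ξ : ℂ) (hξ : ξ ≠ 0) :
      r (antipode ξ) + psiSlope r (antipode ξ) = w - (r ξ + psiSlope r ξ) := by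
    rw [psiSlope_antipode_of_constWidth hr hcw hξ, ← hcw ξ hξ, antipode]
    ring
  -- The `σ` terms cancel: the sum of the two integrands is `w (r + ψ) - w² / 4`.
  have hsum := integral_muSphere_of_antipode_eq_sub (hint₁.add hint₂) (c := w ^ 2 / 2)
    fun ξ hξ => by
      simp only [Pi.add_apply]
      linear_combination w * hsymm ξ hξ
  rw [integral_add' hint₁ hint₂] at hsum
  linarith

end
end

section
/- Fix a, b, C ∈ ℝ and define r : ℂ → ℝ by r(ξ) = (a + b|ξ|² + (3−b)|ξ|⁴ + (1−a)|ξ|⁶)/(1+|ξ|²)³ + C. Then r has constant width 1 + 2C: r(ξ) + r(−1/conj ξ) = 1 + 2C for all ξ ≠ 0. Moreover, if a = b − 1 then r(ξ) = (C + 1/2) + (b − 3/2)·(1−|ξ|²)/(1+|ξ|²) for all ξ, i.e. r is the support function of the round sphere with centre (0,0,b−3/2) and radius C + 1/2. -/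
open Complex ComplexConjugate

/-- The support function of the example as a function of `t = |ξ|²`, without the constant `C`. -/
noncomputable def radialProfile (a b t : ℝ) : ℝ :=
  (a + b * t + (3 - b) * t ^ 2 + (1 - a) * t ^ 3) / (1 + t) ^ 3

theorem normSq_neg_one_div_conj (ξ : ℂ) : normSq (-1 / conj ξ) = (normSq ξ)⁻¹ := by
  rw [neg_div, normSq_neg, map_div₀, map_one, normSq_conj, one_div]

/-- Clearing `t ^ 3` turns the numerator at `t⁻¹` into the reversed polynomial; its sum with the
numerator at `t` has the coefficients `1, 3, 3, 1` of `(1 + t) ^ 3`. -/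
theorem radialProfile_add_radialProfile_inv (a b : ℝ) {t : ℝ} (ht : t ≠ 0) (ht' : 1 + t ≠ 0) :
    radialProfile a b t + radialProfile a b t⁻¹ = 1 := by
  have ht'' : t + 1 ≠ 0 := by rwa [add_comm]
  unfold radialProfile
  field_simp
  ring

theorem radialProfile_sub_one (b : ℝ) {t : ℝ} (ht : 1 + t ≠ 0) :
    radialProfile (b - 1) b t = 1 / 2 + (b - 3 / 2) * (1 - t) / (1 + t) := by
  unfold radialProfile
  field_simp
  ring

/-- Example of §4.2: the explicit rotationally symmetric support
function has constant width `1 + 2C`, and reduces to a round sphere when `a = b − 1`. -/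
theorem example_support_function_constant_width
    (a b C : ℝ) (r : ℂ → ℝ)
    (hr : ∀ ξ : ℂ, r ξ =
      (a + b * Complex.normSq ξ + (3 - b) * Complex.normSq ξ ^ 2
        + (1 - a) * Complex.normSq ξ ^ 3) / (1 + Complex.normSq ξ) ^ 3 + C) :
    (∀ ξ : ℂ, ξ ≠ 0 → r ξ + r (-1 / conj ξ) = 1 + 2 * C) ∧
    (a = b - 1 → ∀ ξ : ℂ,
      r ξ = (C + 1 / 2)
        + (b - 3 / 2) * (1 - Complex.normSq ξ) / (1 + Complex.normSq ξ)) := by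
  have hr : ∀ ξ, r ξ = radialProfile a b (normSq ξ) + C := hr
  have hden : ∀ ξ : ℂ, 1 + normSq ξ ≠ 0 := fun ξ => by linarith [normSq_nonneg ξ]
  refine ⟨fun ξ hξ => ?_, fun hab ξ => ?_⟩
  · have hwidth := radialProfile_add_radialProfile_inv a b (normSq_pos.2 hξ).ne' (hden ξ)
    rw [hr, hr, normSq_neg_one_div_conj]
    linarith
  · rw [hr, hab, radialProfile_sub_one b (hden ξ)]
    ring
end

section
/- Fix a, b ∈ ℝ and let r(ξ) = (a + b|ξ|² + (3−b)|ξ|⁴ + (1−a)|ξ|⁶)/(1+|ξ|²)³, a support function of constant width w = 1. Then ∫ℂ (|σ|² − (r − 1/2 + ψ)²) dμ = π·(a − b + 1)²/35. Equivalently, the functional I(S) = Vol(S)/Vol(S²_w) for this surface equals 1 − 3(a−b+1)²/35, and for the shifted family r + C (of width 1+2C) one has I = 1 − 3(a−b+1)²/(35(1+2C)²). -/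
open Complex MeasureTheory ComplexConjugate

noncomputable section

/-! For a radial support function `r = g ∘ normSq` one has `F = ½(1+t)²g'(t)·ξ` with `t = |ξ|²`,
so the Wirtinger product rule reduces `ψ` and `|σ|²` to one-variable expressions in `g'` and
`g''`. For the example the deficit integrand becomes `(a-b+1)² q(t) / (4(1+t)⁶)` with a palindromic
sextic `q`. In polar coordinates `dA = π dt`, so the `μ`-integral is `π ∫₀^∞ q(t)/(1+t)⁸ dt`;
writing `q` in powers of `1+t` turns this into `∑ cⱼ ∫₀^∞ (1+t)^-(j+2) dt = ∑ cⱼ/(j+1) = 1/35`. -/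

open Set Filter Topology

section Wirtinger

variable {ξ : ℂ}

theorem hasFDerivAt_normSq (ξ : ℂ) : HasFDerivAt normSq (2 • innerSL ℝ ξ) ξ := by
  simpa only [Complex.sq_norm] using (hasStrictFDerivAt_norm_sq ξ).hasFDerivAt

theorem wd_mul {f g : ℂ → ℂ} (hf : DifferentiableAt ℝ f ξ) (hg : DifferentiableAt ℝ g ξ) :
    wd (fun z => f z * g z) ξ = wd f ξ * g ξ + f ξ * wd g ξ := by
  simp only [wd, fderiv_fun_mul hf hg, add_apply, smul_apply, smul_eq_mul]
  ring

theorem wd_id : wd (fun z => z) ξ = 1 := by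
  norm_num [wd, fderiv_fun_id]

theorem wd_conj : wd (fun z => conj z) ξ = 0 := by
  have h : HasFDerivAt (fun z => conj z) (conjCLE : ℂ →L[ℝ] ℂ) ξ := conjCLE.hasFDerivAt
  simp [wd, h.fderiv]

variable {u : ℝ → ℝ} {d : ℝ}

theorem hasFDerivAt_comp_normSq (hu : HasDerivAt u d (normSq ξ)) :
    HasFDerivAt (fun z => u (normSq z)) (d • 2 • innerSL ℝ ξ) ξ :=
  hu.comp_hasFDerivAt ξ (hasFDerivAt_normSq ξ)

theorem hasFDerivAt_ofReal_comp_normSq (hu : HasDerivAt u d (normSq ξ)) :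
    HasFDerivAt (fun z => (u (normSq z) : ℂ)) (ofRealCLM.comp (d • 2 • innerSL ℝ ξ)) ξ :=
  ofRealCLM.hasFDerivAt.comp ξ (hasFDerivAt_comp_normSq hu)

theorem wd_ofReal_comp_normSq (hu : HasDerivAt u d (normSq ξ)) :
    wd (fun z => (u (normSq z) : ℂ)) ξ = d * conj ξ := by
  rw [wd, (hasFDerivAt_ofReal_comp_normSq hu).fderiv]
  apply Complex.ext <;> simp <;> ring

theorem wd_ofReal_comp_normSq_mul {f : ℂ → ℂ} (hu : HasDerivAt u d (normSq ξ))
    (hf : DifferentiableAt ℝ f ξ) :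
    wd (fun z => (u (normSq z) : ℂ) * f z) ξ = d * conj ξ * f ξ + u (normSq ξ) * wd f ξ := by
  rw [wd_mul (hasFDerivAt_ofReal_comp_normSq hu).differentiableAt hf, wd_ofReal_comp_normSq hu]

theorem wdbarR_comp_normSq (hu : HasDerivAt u d (normSq ξ)) :
    wdbarR (fun z => u (normSq z)) ξ = d * ξ := by
  rw [wdbarR, (hasFDerivAt_comp_normSq hu).fderiv]
  apply Complex.ext <;> simp <;> ring

end Wirtinger

section Radial

variable {g g' g'' : ℝ → ℝ}

theorem Fcong_comp_normSq (hg : ∀ t, 0 ≤ t → HasDerivAt g (g' t) t) :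
    Fcong (fun z => g (normSq z))
      = fun z => (((1 + normSq z) ^ 2 * g' (normSq z) / 2 : ℝ) : ℂ) * z := by
  funext z
  rw [Fcong, wdbarR_comp_normSq (hg _ (normSq_nonneg z))]
  push_cast
  ring

theorem psiSlope_comp_normSq (hg : ∀ t, 0 ≤ t → HasDerivAt g (g' t) t)
    (hg' : ∀ t, 0 ≤ t → HasDerivAt g' (g'' t) t) (ξ : ℂ) :
    psiSlope (fun z => g (normSq z)) ξ
      = (1 + normSq ξ) ^ 2 * (g' (normSq ξ) + normSq ξ * g'' (normSq ξ)) / 2 := by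
  have hF : (fun z => Fcong (fun z => g (normSq z)) z / (((1 + normSq z) ^ 2 : ℝ) : ℂ))
      = fun z => ((g' (normSq z) / 2 : ℝ) : ℂ) * z := by
    funext z
    have hz : (1 + normSq z) ^ 2 ≠ 0 := by have := normSq_nonneg z; positivity
    rw [Fcong_comp_normSq hg, div_eq_iff (mod_cast hz)]
    push_cast
    ring
  have hd : HasDerivAt (fun t => g' t / 2) (g'' (normSq ξ) / 2) (normSq ξ) :=
    (hg' _ (normSq_nonneg ξ)).div_const 2
  rw [psiSlope, hF, wd_ofReal_comp_normSq_mul (f := fun z => z) hd differentiableAt_fun_id, wd_id,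
    mul_assoc, ← normSq_eq_conj_mul_self]
  norm_cast
  ring

theorem normSq_sigmaSlope_comp_normSq (hg : ∀ t, 0 ≤ t → HasDerivAt g (g' t) t)
    (hg' : ∀ t, 0 ≤ t → HasDerivAt g' (g'' t) t) (ξ : ℂ) :
    normSq (sigmaSlope (fun z => g (normSq z)) ξ)
      = (normSq ξ * ((1 + normSq ξ) * g' (normSq ξ)
          + (1 + normSq ξ) ^ 2 * g'' (normSq ξ) / 2)) ^ 2 := by
  have hF : (fun z => conj (Fcong (fun z => g (normSq z)) z))
      = fun z => (((1 + normSq z) ^ 2 * g' (normSq z) / 2 : ℝ) : ℂ) * conj z := by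
    funext z
    simp only [Fcong_comp_normSq hg, map_mul, conj_ofReal]
  have hd : HasDerivAt (fun t => (1 + t) ^ 2 * g' t / 2)
      ((1 + normSq ξ) * g' (normSq ξ) + (1 + normSq ξ) ^ 2 * g'' (normSq ξ) / 2) (normSq ξ) := by
    have h1 : HasDerivAt (fun t : ℝ => (1 + t) ^ 2) (2 * (1 + normSq ξ)) (normSq ξ) := by
      simpa using ((hasDerivAt_id (normSq ξ)).const_add (1 : ℝ)).fun_pow 2
    exact ((h1.mul (hg' _ (normSq_nonneg ξ))).div_const 2).congr_deriv (by ring)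
  rw [sigmaSlope, hF, wd_ofReal_comp_normSq_mul (f := fun z => conj z) hd
    conjCLE.differentiableAt, wd_conj]
  simp only [mul_zero, add_zero, normSq_neg, map_mul, normSq_ofReal, normSq_conj]
  ring

end Radial

section RadialIntegral

variable {E : Type*} [NormedAddCommGroup E] [NormedSpace ℝ E]

theorem integral_comp_normSq (f : ℝ → E) :
    ∫ ξ : ℂ, f (normSq ξ) = Real.pi • ∫ t in Ioi 0, f t := by
  have hball : volume.real (Metric.ball (0 : ℂ) 1) = Real.pi := by
    simp [measureReal_def, Complex.volume_ball]
  have hsub := integral_comp_rpow_Ioi f (p := 2) two_ne_zero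
  simp_rw [← Complex.sq_norm]
  rw [integral_fun_norm_addHaar volume (fun y => f (y ^ 2)), Complex.finrank_real_complex, hball,
    ← hsub, smul_comm, ← Nat.cast_smul_eq_nsmul ℝ, ← integral_smul]
  congr 1
  refine setIntegral_congr_fun measurableSet_Ioi fun x _ => ?_
  norm_num [smul_smul]

theorem integral_muSphere_comp_normSq (f : ℝ → E) :
    ∫ ξ, f (normSq ξ) ∂muSphere = Real.pi • ∫ t in Ioi 0, (4 / (1 + t) ^ 2) • f t := by
  have hdens : Measurable fun ξ : ℂ => ENNReal.ofReal (4 / (1 + normSq ξ) ^ 2) := by fun_prop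
  rw [muSphere, integral_withDensity_eq_integral_toReal_smul hdens
    (ae_of_all _ fun _ => ENNReal.ofReal_lt_top)]
  simp_rw [ENNReal.toReal_ofReal (by positivity : (0 : ℝ) ≤ 4 / (1 + normSq _) ^ 2)]
  exact integral_comp_normSq fun t => (4 / (1 + t) ^ 2) • f t

end RadialIntegral

section OneAddPow

theorem HasDerivAt.div_one_add_pow {p : ℝ → ℝ} {p' t : ℝ} (hp : HasDerivAt p p' t) (n : ℕ)
    (ht : 1 + t ≠ 0) :
    HasDerivAt (fun s => p s / (1 + s) ^ n) ((p' * (1 + t) - n * p t) / (1 + t) ^ (n + 1)) t := by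
  -- the derivative written without the truncated exponent `n - 1`
  have hpow : HasDerivAt (fun s : ℝ => (1 + s) ^ n) (n * (1 + t) ^ n / (1 + t)) t := by
    refine (((hasDerivAt_id' t).const_add (1 : ℝ)).fun_pow n).congr_deriv ?_
    rcases n with _ | n
    · simp
    · field_simp
      simp [pow_succ, mul_comm]
  refine (hp.div hpow (pow_ne_zero n ht)).congr_deriv ?_
  field_simp
  ring

theorem hasDerivAt_neg_inv_div_one_add_pow (n : ℕ) {t : ℝ} (ht : 1 + t ≠ 0) :
    HasDerivAt (fun s => -((n : ℝ) + 1)⁻¹ / (1 + s) ^ (n + 1)) ((1 + t) ^ (n + 2))⁻¹ t := by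
  refine ((hasDerivAt_const t _).div_one_add_pow (n + 1) ht).congr_deriv ?_
  field_simp
  push_cast
  ring

theorem tendsto_div_one_add_pow_atTop (c : ℝ) (n : ℕ) :
    Tendsto (fun s : ℝ => c / (1 + s) ^ (n + 1)) atTop (𝓝 0) :=
  tendsto_const_nhds.div_atTop
    ((tendsto_pow_atTop n.succ_ne_zero).comp (tendsto_atTop_add_const_left _ 1 tendsto_id))

theorem integrableOn_Ioi_inv_one_add_pow (n : ℕ) :
    IntegrableOn (fun t : ℝ => ((1 + t) ^ (n + 2))⁻¹) (Ioi 0) :=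
  integrableOn_Ioi_deriv_of_nonneg'
    (fun t ht => hasDerivAt_neg_inv_div_one_add_pow n (by linarith [mem_Ici.mp ht]))
    (fun t ht => by have := mem_Ioi.mp ht; positivity) (tendsto_div_one_add_pow_atTop _ n)

theorem integral_Ioi_inv_one_add_pow (n : ℕ) :
    ∫ t in Ioi (0 : ℝ), ((1 + t) ^ (n + 2))⁻¹ = ((n : ℝ) + 1)⁻¹ := by
  rw [integral_Ioi_of_hasDerivAt_of_tendsto'
    (fun t ht => hasDerivAt_neg_inv_div_one_add_pow n (by linarith [mem_Ici.mp ht]))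
    (integrableOn_Ioi_inv_one_add_pow n) (tendsto_div_one_add_pow_atTop _ n)]
  simp

end OneAddPow

section Example

theorem hasDerivAt_cubic (c₀ c₁ c₂ c₃ t : ℝ) :
    HasDerivAt (fun s => c₀ + c₁ * s + c₂ * s ^ 2 + c₃ * s ^ 3)
      (c₁ + 2 * c₂ * t + 3 * c₃ * t ^ 2) t := by
  refine ((((hasDerivAt_id' t).const_mul c₁).const_add c₀ |>.add
    ((hasDerivAt_pow 2 t).const_mul c₂)).add ((hasDerivAt_pow 3 t).const_mul c₃)).congr_deriv ?_
  push_cast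
  ring

variable (a b : ℝ)

def exampleProfile (t : ℝ) : ℝ :=
  (a + b * t + (3 - b) * t ^ 2 + (1 - a) * t ^ 3) / (1 + t) ^ 3

def exampleProfileDeriv (t : ℝ) : ℝ :=
  (b - 3 * a + (6 - 4 * b) * t + (b - 3 * a) * t ^ 2) / (1 + t) ^ 4

variable {a b} {t : ℝ}

theorem hasDerivAt_exampleProfile (ht : 0 ≤ t) :
    HasDerivAt (exampleProfile a b) (exampleProfileDeriv a b t) t := by
  refine ((hasDerivAt_cubic a b (3 - b) (1 - a) t).div_one_add_pow 3 (by positivity)).congr_deriv ?_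
  rw [exampleProfileDeriv]
  ring

theorem hasDerivAt_exampleProfileDeriv (ht : 0 ≤ t) :
    HasDerivAt (exampleProfileDeriv a b)
      (((6 - 4 * b + 2 * (b - 3 * a) * t) * (1 + t)
        - 4 * (b - 3 * a + (6 - 4 * b) * t + (b - 3 * a) * t ^ 2)) / (1 + t) ^ 5) t := by
  have hnum := hasDerivAt_cubic (b - 3 * a) (6 - 4 * b) (b - 3 * a) 0 t
  simp only [zero_mul, add_zero, mul_zero] at hnum
  exact (hnum.div_one_add_pow 4 (by positivity)).congr_deriv (by push_cast; ring)

def deficitPoly (t : ℝ) : ℝ :=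
  -1 + 18 * t - 63 * t ^ 2 + 92 * t ^ 3 - 63 * t ^ 4 + 18 * t ^ 5 - t ^ 6

theorem deficit_integrand_example {r : ℂ → ℝ}
    (hr : ∀ ξ : ℂ, r ξ = exampleProfile a b (normSq ξ)) (ξ : ℂ) :
    normSq (sigmaSlope r ξ) - (r ξ - 1 / 2 + psiSlope r ξ) ^ 2
      = (a - b + 1) ^ 2 * (deficitPoly (normSq ξ) / (4 * (1 + normSq ξ) ^ 6)) := by
  obtain rfl : r = fun z => exampleProfile a b (normSq z) := funext hr
  have hg (t : ℝ) (ht : 0 ≤ t) := hasDerivAt_exampleProfile (a := a) (b := b) ht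
  have hg' (t : ℝ) (ht : 0 ≤ t) := hasDerivAt_exampleProfileDeriv (a := a) (b := b) ht
  rw [psiSlope_comp_normSq hg hg', normSq_sigmaSlope_comp_normSq hg hg']
  have : 0 ≤ normSq ξ := normSq_nonneg ξ
  simp only [exampleProfile, exampleProfileDeriv, deficitPoly]
  field_simp
  ring

theorem integral_deficitPoly :
    ∫ t in Ioi (0 : ℝ), 4 / (1 + t) ^ 2 * (deficitPoly t / (4 * (1 + t) ^ 6)) = 1 / 35 := by
  -- `deficitPoly t = ∑ j, c j * (1 + t) ^ (6 - j)`
  let c : Fin 7 → ℝ := ![-1, 24, -168, 544, -912, 768, -256]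
  have hpf (t : ℝ) (ht : t ∈ Ioi 0) : 4 / (1 + t) ^ 2 * (deficitPoly t / (4 * (1 + t) ^ 6))
      = ∑ j, c j * ((1 + t) ^ ((j : ℕ) + 2))⁻¹ := by
    have : 0 < t := ht
    simp only [c, Fin.sum_univ_seven, Matrix.cons_val, Fin.coe_ofNat_eq_mod, Nat.reduceMod,
      Nat.reduceAdd, deficitPoly]
    field_simp
    ring
  rw [setIntegral_congr_fun measurableSet_Ioi hpf,
    integral_finsetSum _ fun (j : Fin 7) _ => (integrableOn_Ioi_inv_one_add_pow j).const_mul (c j)]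
  simp_rw [integral_const_mul, integral_Ioi_inv_one_add_pow]
  norm_num [c, Fin.sum_univ_succ]

theorem integral_deficit_example {r : ℂ → ℝ}
    (hr : ∀ ξ : ℂ, r ξ = exampleProfile a b (normSq ξ)) :
    ∫ ξ, (normSq (sigmaSlope r ξ) - (r ξ - 1 / 2 + psiSlope r ξ) ^ 2) ∂muSphere
      = Real.pi * (a - b + 1) ^ 2 / 35 := by
  simp_rw [deficit_integrand_example hr]
  rw [integral_muSphere_comp_normSq fun t => (a - b + 1) ^ 2 * (deficitPoly t / (4 * (1 + t) ^ 6))]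
  simp_rw [smul_eq_mul, mul_left_comm _ ((a - b + 1) ^ 2), integral_const_mul, integral_deficitPoly]
  ring

end Example

/-- for the explicit example of §4.2 (with `C = 0`, width `w = 1`),
the deficit integral equals `π(a−b+1)²/35`; equivalently the volume functional is
`I = 1 − 3(a−b+1)²/35`, and `I = 1 − 3(a−b+1)²/(35(1+2C)²)` for the shifted family. -/
theorem example_deficit_integral_and_volume_functional
    (a b : ℝ) (r : ℂ → ℝ)
    (hr : ∀ ξ : ℂ, r ξ =
      (a + b * Complex.normSq ξ + (3 - b) * Complex.normSq ξ ^ 2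
        + (1 - a) * Complex.normSq ξ ^ 3) / (1 + Complex.normSq ξ) ^ 3) :
    (∫ ξ, (Complex.normSq (sigmaSlope r ξ) - (r ξ - 1 / 2 + psiSlope r ξ) ^ 2) ∂muSphere
        = Real.pi * (a - b + 1) ^ 2 / 35) ∧
    (1 - 3 / (Real.pi * 1 ^ 2) *
        ∫ ξ, (Complex.normSq (sigmaSlope r ξ) - (r ξ - 1 / 2 + psiSlope r ξ) ^ 2) ∂muSphere
        = 1 - 3 * (a - b + 1) ^ 2 / 35) ∧
    (∀ C : ℝ,
      1 - 3 / (Real.pi * (1 + 2 * C) ^ 2) *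
        ∫ ξ, (Complex.normSq (sigmaSlope r ξ) - (r ξ - 1 / 2 + psiSlope r ξ) ^ 2) ∂muSphere
        = 1 - 3 * (a - b + 1) ^ 2 / (35 * (1 + 2 * C) ^ 2)) := by
  have hI := integral_deficit_example hr
  have hI_width (w : ℝ) : 1 - 3 / (Real.pi * w ^ 2) * (Real.pi * (a - b + 1) ^ 2 / 35)
      = 1 - 3 * (a - b + 1) ^ 2 / (35 * w ^ 2) := by
    rw [div_mul_div_comm, show 3 * (Real.pi * (a - b + 1) ^ 2) = Real.pi * (3 * (a - b + 1) ^ 2)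
      by ring, show Real.pi * w ^ 2 * 35 = Real.pi * (35 * w ^ 2) by ring,
      mul_div_mul_left _ _ Real.pi_ne_zero]
  refine ⟨hI, ?_, fun C => ?_⟩ <;> rw [hI, hI_width]
  norm_num

end
end
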